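/- arXiv:1902.05393 — 2 statements merged into one kernel-verified Lean document; each statement's English description precedes it below -/
import Mathlib

section
/- Let q be a formal variable and work in the ring of formal power series in one variable x over the field ℚ(q) of rational functions. Then the series F = Σ_{k≥0} x^k / ∏_{j=1}^{k}(q^j − 1) equals exp(L), where L = Σ_{k≥1} ((−1)^{k−1} / (k·(q^k − 1))) · x^k and exp(L) := Σ_{m≥0} L^m / m! (well-defined since L has zero constant coefficient). Equivalently, the formal logarithm of F is Σ_{k≥1} R_k x^k with R_k := (−1)^{k−1}/(k(q^k−1)). -/
open PowerSeries

/-- The formal variable `q`, as the rational function `X` in `ℚ(q) = RatFunc ℚ`. -/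
noncomputable def qvar : RatFunc ℚ := RatFunc.X

/-- `F = Σ_{k≥0} x^k / ∏_{j=1}^{k}(q^j − 1)` as a power series over `ℚ(q)`. -/
noncomputable def Fser : PowerSeries (RatFunc ℚ) :=
  PowerSeries.mk fun k => (∏ j ∈ Finset.range k, (qvar ^ (j + 1) - 1))⁻¹

/-- `L = Σ_{k≥1} ((−1)^{k−1} / (k·(q^k − 1))) · x^k`. -/
noncomputable def Lser : PowerSeries (RatFunc ℚ) :=
  PowerSeries.mk fun k =>
    if k = 0 then 0 else (-1) ^ (k - 1) / ((k : RatFunc ℚ) * (qvar ^ k - 1))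

/-- The exponential `exp(L) = Σ_{m≥0} L^m / m!` of a power series `L` with zero constant
coefficient: since `coeff n (L^m) = 0` for `m > n`, the `n`-th coefficient is the finite sum
`Σ_{m=0}^{n} coeff n (L^m) / m!`. -/
noncomputable def expPS (L : PowerSeries (RatFunc ℚ)) : PowerSeries (RatFunc ℚ) :=
  PowerSeries.mk fun n =>
    ∑ m ∈ Finset.range (n + 1),
      (PowerSeries.coeff n (L ^ m)) / (Nat.factorial m : RatFunc ℚ)

abbrev K := RatFunc ℚ

instance : CharZero K :=
  charZero_of_injective_algebraMap (algebraMap ℚ (RatFunc ℚ)).injective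

-- basic nonvanishing
lemma qpow_sub_one_ne {k : ℕ} (hk : k ≠ 0) : qvar ^ k - 1 ≠ 0 := by
  intro h
  have h1 : qvar ^ k = 1 := by linear_combination h
  have : (Polynomial.X : Polynomial ℚ) ^ k = 1 := by
    apply RatFunc.algebraMap_injective ℚ
    simpa [qvar, RatFunc.algebraMap_X, map_pow] using h1
  have := congrArg (fun p => Polynomial.coeff p 0) this
  simp [Polynomial.coeff_X_pow, hk] at this
  exact hk this.symm

lemma kcast_ne {k : ℕ} (hk : k ≠ 0) : (k : K) ≠ 0 := Nat.cast_ne_zero.mpr hk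

-- vanishing of low coefficients of powers
lemma coeff_pow_zero_of_lt {A : PowerSeries K} (hA : constantCoeff A = 0)
    {n m : ℕ} (h : n < m) : coeff n (A ^ m) = 0 := by
  have : (X : K⟦X⟧) ^ m ∣ A ^ m := pow_dvd_pow_of_dvd (X_dvd_iff.mpr hA) m
  exact X_pow_dvd_iff.mp this n h

lemma coeff_mul_pow_zero {A B : PowerSeries K} (hA : constantCoeff A = 0)
    (hB : constantCoeff B = 0) {n i j : ℕ} (h : n < i + j) :
    coeff n (A ^ i * B ^ j) = 0 := by
  have : (X : K⟦X⟧) ^ (i + j) ∣ A ^ i * B ^ j := by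
    rw [pow_add]
    exact mul_dvd_mul (pow_dvd_pow_of_dvd (X_dvd_iff.mpr hA) i)
      (pow_dvd_pow_of_dvd (X_dvd_iff.mpr hB) j)
  exact X_pow_dvd_iff.mp this n h

lemma coeff_expPS (L : PowerSeries K) (n : ℕ) :
    coeff n (expPS L) =
      ∑ m ∈ Finset.range (n + 1), (coeff n (L ^ m)) / (Nat.factorial m : K) := by
  simp [expPS]

lemma constantCoeff_expPS (L : PowerSeries K) : constantCoeff (expPS L) = 1 := by
  have := coeff_expPS L 0
  simp at this
  simpa [← coeff_zero_eq_constantCoeff] using this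

-- Fact A
lemma rescale_expPS (L : PowerSeries K) (a : K) :
    rescale a (expPS L) = expPS (rescale a L) := by
  ext n
  rw [coeff_rescale, coeff_expPS, coeff_expPS, Finset.mul_sum]
  refine Finset.sum_congr rfl fun m _ => ?_
  rw [← map_pow, coeff_rescale, mul_div_assoc]

-- Fact B
lemma expPS_add {A B : PowerSeries K} (hA : constantCoeff A = 0)
    (hB : constantCoeff B = 0) : expPS (A + B) = expPS A * expPS B := by
  ext n
  set g : ℕ → ℕ → K := fun i j =>
    coeff n (A ^ i * B ^ j) / ((Nat.factorial i : K) * (Nat.factorial j : K)) with hgdef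
  have hg0 : ∀ i j, n < i + j → g i j = 0 := by
    intro i j h
    simp only [hgdef]
    rw [coeff_mul_pow_zero hA hB h, zero_div]
  have hRHS : coeff n (expPS A * expPS B)
      = ∑ i ∈ Finset.range (n + 1), ∑ j ∈ Finset.range (n + 1), g i j := by
    rw [coeff_mul]
    have step1 : ∀ p ∈ Finset.HasAntidiagonal.antidiagonal n,
        coeff p.1 (expPS A) * coeff p.2 (expPS B)
          = ∑ i ∈ Finset.range (n + 1), ∑ j ∈ Finset.range (n + 1),
              coeff p.1 (A ^ i) * coeff p.2 (B ^ j)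
                / ((Nat.factorial i : K) * (Nat.factorial j : K)) := by
      intro p hp
      obtain ⟨hp1, hp2⟩ : p.1 ≤ n ∧ p.2 ≤ n := by
        have := Finset.HasAntidiagonal.mem_antidiagonal.mp hp; omega
      rw [coeff_expPS, coeff_expPS]
      rw [Finset.sum_subset (Finset.range_subset_range.mpr (by omega : p.1 + 1 ≤ n + 1))
        (fun m _ hm => by
          simp only [Finset.mem_range, not_lt] at hm
          rw [coeff_pow_zero_of_lt hA (by omega), zero_div])]
      rw [Finset.sum_subset (Finset.range_subset_range.mpr (by omega : p.2 + 1 ≤ n + 1))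
        (fun m _ hm => by
          simp only [Finset.mem_range, not_lt] at hm
          rw [coeff_pow_zero_of_lt hB (by omega), zero_div])]
      rw [Finset.sum_mul_sum]
      refine Finset.sum_congr rfl fun i _ => Finset.sum_congr rfl fun j _ => ?_
      rw [div_mul_div_comm]
    rw [Finset.sum_congr rfl step1, Finset.sum_comm]
    refine Finset.sum_congr rfl fun i _ => ?_
    rw [Finset.sum_comm]
    refine Finset.sum_congr rfl fun j _ => ?_
    simp only [hgdef]
    rw [coeff_mul, Finset.sum_div]
  have hLHS : coeff n (expPS (A + B))
      = ∑ m ∈ Finset.range (n + 1), ∑ i ∈ Finset.range (m + 1), g i (m - i) := by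
    rw [coeff_expPS]
    refine Finset.sum_congr rfl fun m _ => ?_
    rw [add_pow, map_sum, Finset.sum_div]
    refine Finset.sum_congr rfl fun i hi => ?_
    have hi' : i ≤ m := Finset.mem_range_succ_iff.mp hi
    have hC : ((Nat.choose m i : K⟦X⟧)) = C ((Nat.choose m i : K)) := by
      rw [map_natCast]
    rw [mul_comm (A ^ i * B ^ (m - i)) _, hC, coeff_C_mul]
    have hc : ((Nat.choose m i : K)) * ((Nat.factorial i : K) * (Nat.factorial (m - i) : K))
        = (Nat.factorial m : K) := by
      have := Nat.choose_mul_factorial_mul_factorial hi'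
      push_cast [← this]
      ring
    simp only [hgdef]
    have hfi : (Nat.factorial i : K) ≠ 0 := kcast_ne (Nat.factorial_ne_zero i)
    have hfmi : (Nat.factorial (m - i) : K) ≠ 0 := kcast_ne (Nat.factorial_ne_zero (m - i))
    have hfm : (Nat.factorial m : K) ≠ 0 := kcast_ne (Nat.factorial_ne_zero m)
    field_simp
    linear_combination coeff n (A ^ i * B ^ (m - i)) * hc
  have tri : ∑ m ∈ Finset.range (n + 1), ∑ i ∈ Finset.range (m + 1), g i (m - i)
      = ∑ i ∈ Finset.range (n + 1), ∑ j ∈ Finset.range (n + 1), g i j := by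
    rw [Finset.sum_sigma', Finset.sum_sigma']
    have hsub := Finset.filter_subset (fun p : (_ : ℕ) × ℕ => p.1 + p.2 ≤ n)
      ((Finset.range (n + 1)).sigma fun _ => Finset.range (n + 1))
    rw [← Finset.sum_subset hsub (fun p hmem hp => by
      refine hg0 p.1 p.2 ?_
      simp only [Finset.mem_filter, not_and] at hp
      exact lt_of_not_ge (hp hmem))]
    refine Finset.sum_nbij' (fun p => (⟨p.2, p.1 - p.2⟩ : (_ : ℕ) × ℕ))
      (fun p => (⟨p.1 + p.2, p.1⟩ : (_ : ℕ) × ℕ)) ?_ ?_ ?_ ?_ ?_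
    · rintro ⟨m, i⟩ hp
      simp only [Finset.mem_sigma, Finset.mem_range] at hp
      simp only [Finset.mem_filter, Finset.mem_sigma, Finset.mem_range]
      omega
    · rintro ⟨i, j⟩ hp
      simp only [Finset.mem_filter, Finset.mem_sigma, Finset.mem_range] at hp
      simp only [Finset.mem_sigma, Finset.mem_range]
      omega
    · rintro ⟨m, i⟩ hp
      simp only [Finset.mem_sigma, Finset.mem_range] at hp
      dsimp only
      exact Sigma.ext (show i + (m - i) = m by omega) HEq.rfl
    · rintro ⟨i, j⟩ hp
      simp only [Finset.mem_filter, Finset.mem_sigma, Finset.mem_range] at hp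
      dsimp only
      exact Sigma.ext rfl (heq_of_eq (show i + j - i = j by omega))
    · rintro ⟨m, i⟩ _
      rfl
  rw [hLHS, tri, hRHS]

lemma coeff_derivativeFun_old (f : K⟦X⟧) (n : ℕ) :
    coeff n (derivativeFun f) = coeff (n + 1) f * (n + 1) := coeff_derivative f n

-- derivative of powers
lemma derivativeFun_pow (L : PowerSeries K) (m : ℕ) :
    derivativeFun (L ^ (m + 1)) = ((m : K⟦X⟧) + 1) * (derivativeFun L * L ^ m) := by
  induction m with
  | zero => simp
  | succ m ih =>
    have h2 : L ^ (m + 2) = L * L ^ (m + 1) := by ring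
    rw [h2, derivativeFun_mul, ih]
    push_cast
    simp only [smul_eq_mul]
    ring

-- Fact C
lemma derivativeFun_expPS {L : PowerSeries K} (hL : constantCoeff L = 0) :
    derivativeFun (expPS L) = derivativeFun L * expPS L := by
  ext n
  have hRHS : coeff n (derivativeFun L * expPS L)
      = ∑ m ∈ Finset.range (n + 1),
          coeff n (derivativeFun L * L ^ m) / (Nat.factorial m : K) := by
    rw [coeff_mul]
    have step1 : ∀ p ∈ Finset.HasAntidiagonal.antidiagonal n,
        coeff p.1 (derivativeFun L) * coeff p.2 (expPS L)
          = ∑ m ∈ Finset.range (n + 1),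
              coeff p.1 (derivativeFun L) * coeff p.2 (L ^ m)
                / (Nat.factorial m : K) := by
      intro p hp
      have hp2 : p.2 ≤ n := by
        have := Finset.HasAntidiagonal.mem_antidiagonal.mp hp; omega
      rw [coeff_expPS, Finset.mul_sum]
      rw [Finset.sum_subset (Finset.range_subset_range.mpr (by omega :
          p.2 + 1 ≤ n + 1)) (fun m _ hm => by
        simp only [Finset.mem_range, not_lt] at hm
        rw [coeff_pow_zero_of_lt hL (by omega), zero_div, mul_zero])]
      exact Finset.sum_congr rfl fun m _ => (mul_div_assoc _ _ _).symm
    rw [Finset.sum_congr rfl step1, Finset.sum_comm]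
    refine Finset.sum_congr rfl fun m _ => ?_
    rw [coeff_mul, Finset.sum_div]
  rw [coeff_derivativeFun_old, coeff_expPS, hRHS, Finset.sum_range_succ']
  have h0 : coeff (n + 1) (L ^ 0) / (Nat.factorial 0 : K) = 0 := by
    simp [coeff_one]
  rw [h0, add_zero, Finset.sum_mul]
  refine Finset.sum_congr rfl fun m _ => ?_
  have h1 : coeff n (derivativeFun (L ^ (m + 1)))
      = ((m : K) + 1) * coeff n (derivativeFun L * L ^ m) := by
    rw [derivativeFun_pow]
    have hC : ((m : K⟦X⟧) + 1) = C ((m : K) + 1) := by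
      rw [map_add, map_one, map_natCast]
    rw [hC, coeff_C_mul]
  have h2 : coeff n (derivativeFun (L ^ (m + 1)))
      = coeff (n + 1) (L ^ (m + 1)) * ((n : K) + 1) :=
    coeff_derivativeFun _ _
  have hm1 : ((m : K) + 1) ≠ 0 := by
    have : ((m : K) + 1) = ((m + 1 : ℕ) : K) := by push_cast; ring
    rw [this]; exact kcast_ne (Nat.succ_ne_zero m)
  have hfm : (Nat.factorial m : K) ≠ 0 := kcast_ne (Nat.factorial_ne_zero m)
  have hfm1 : (Nat.factorial (m + 1) : K) ≠ 0 := kcast_ne (Nat.factorial_ne_zero (m + 1))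
  have hfs : (Nat.factorial (m + 1) : K) = ((m : K) + 1) * (Nat.factorial m : K) := by
    rw [Nat.factorial_succ]; push_cast; ring
  field_simp
  rw [hfs]
  linear_combination (Nat.factorial m : K) * (h2.symm.trans h1)

noncomputable def Pser : PowerSeries K :=
  PowerSeries.mk fun k => if k = 0 then 0 else (-1) ^ (k - 1) / (k : K)

lemma constantCoeff_Lser : constantCoeff Lser = 0 := by
  rw [← coeff_zero_eq_constantCoeff_apply]
  simp [Lser]

lemma constantCoeff_Pser : constantCoeff Pser = 0 := by
  rw [← coeff_zero_eq_constantCoeff_apply]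
  simp [Pser]

lemma rescale_Lser : rescale qvar Lser = Lser + Pser := by
  ext k
  rw [coeff_rescale, map_add]
  simp only [Lser, Pser, coeff_mk]
  rcases Nat.eq_zero_or_pos k with hk | hk
  · simp [hk]
  · have hk0 : k ≠ 0 := hk.ne'
    simp only [if_neg hk0]
    have h1 : qvar ^ k - 1 ≠ 0 := qpow_sub_one_ne hk0
    have h2 : (k : K) ≠ 0 := kcast_ne hk0
    field_simp
    ring

lemma coeff_derivativeFun_Pser (k : ℕ) :
    coeff k (derivativeFun Pser) = (-1) ^ k := by
  rw [coeff_derivativeFun_old]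
  simp only [Pser, coeff_mk, if_neg (Nat.succ_ne_zero k), Nat.add_sub_cancel]
  have h : ((k : K) + 1) ≠ 0 := by
    have : ((k : K) + 1) = ((k + 1 : ℕ) : K) := by push_cast; ring
    rw [this]; exact kcast_ne (Nat.succ_ne_zero k)
  push_cast
  field_simp

lemma one_add_X_mul_DP : (1 + X) * derivativeFun Pser = 1 := by
  ext k
  rw [add_mul, one_mul, map_add, coeff_one]
  cases k with
  | zero =>
    rw [coeff_derivativeFun_Pser]
    have : coeff 0 (X * derivativeFun Pser) = 0 := by
      rw [coeff_zero_eq_constantCoeff_apply, map_mul, constantCoeff_X, zero_mul]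
    rw [this]
    norm_num
  | succ k =>
    rw [coeff_succ_X_mul, coeff_derivativeFun_Pser, coeff_derivativeFun_Pser,
      if_neg (Nat.succ_ne_zero k), pow_succ]
    ring

lemma expPS_Pser : expPS Pser = 1 + (X : K⟦X⟧) := by
  set Q := expPS Pser with hQdef
  have hQeq : Q = (1 + X) * derivativeFun Q := by
    rw [hQdef, derivativeFun_expPS constantCoeff_Pser, ← mul_assoc, one_add_X_mul_DP,
      one_mul]
  have hrec : ∀ k, coeff k Q
      = coeff k (derivativeFun Q) + coeff k (X * derivativeFun Q) := by
    intro k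
    conv_lhs => rw [hQeq]
    rw [add_mul, one_mul, map_add]
  have hq0 : coeff 0 Q = 1 := by
    rw [coeff_zero_eq_constantCoeff_apply, hQdef, constantCoeff_expPS]
  have hq1 : coeff 1 Q = 1 := by
    have := hrec 0
    rw [hq0, coeff_derivativeFun_old] at this
    have hx : coeff 0 (X * derivativeFun Q) = 0 := by
      rw [coeff_zero_eq_constantCoeff_apply, map_mul, constantCoeff_X, zero_mul]
    rw [hx, add_zero] at this
    push_cast at this
    linear_combination -this
  have hstep : ∀ k : ℕ, coeff (k + 2) Q * ((k : K) + 2) = -(k : K) * coeff (k + 1) Q := by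
    intro k
    have := hrec (k + 1)
    rw [coeff_succ_X_mul, coeff_derivativeFun_old, coeff_derivativeFun_old] at this
    push_cast at this
    linear_combination -this
  have hzero : ∀ k : ℕ, coeff (k + 2) Q = 0 := by
    intro k
    induction k with
    | zero =>
      have := hstep 0
      norm_num at this
      exact this
    | succ k ih =>
      have h3 := hstep (k + 1)
      rw [ih, mul_zero] at h3
      push_cast at h3
      have h2 : ((k : K) + 1 + 2) ≠ 0 := by
        have he : ((k : K) + 1 + 2) = ((k + 3 : ℕ) : K) := by push_cast; ring
        rw [he]; exact kcast_ne (by omega)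
      have h4 : coeff (k + 1 + 2) Q * ((k : K) + 1 + 2) = 0 := by linear_combination h3
      rcases mul_eq_zero.mp h4 with h | h
      · exact h
      · exact absurd h h2
  ext k
  match k with
  | 0 => rw [hq0]; simp
  | 1 => rw [hq1]; simp [coeff_one]
  | (k + 2) =>
    rw [hzero k, map_add, coeff_one, coeff_X]
    simp

/-- `Σ_{k≥0} x^k / ∏_{j=1}^{k}(q^j − 1) = exp (Σ_{k≥1} ((−1)^{k−1}/(k(q^k−1))) x^k)`,
i.e. the formal logarithm of `F` is `Σ_{k≥1} R_k x^k` with `R_k = (−1)^{k−1}/(k(q^k−1))`. -/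
theorem F_eq_exp_L :
    PowerSeries.constantCoeff Lser = 0 ∧ Fser = expPS Lser := by
  refine ⟨constantCoeff_Lser, ?_⟩
  have hE : rescale qvar (expPS Lser) = expPS Lser * (1 + X) := by
    rw [rescale_expPS, rescale_Lser, expPS_add constantCoeff_Lser constantCoeff_Pser,
      expPS_Pser]
  have erec : ∀ n : ℕ,
      coeff (n + 1) (expPS Lser) * (qvar ^ (n + 1) - 1) = coeff n (expPS Lser) := by
    intro n
    have h := congrArg (coeff (n + 1)) hE
    rw [coeff_rescale, mul_add, mul_one, map_add, mul_comm (expPS Lser) X,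
      coeff_succ_X_mul] at h
    linear_combination h
  have frec : ∀ n : ℕ,
      coeff (n + 1) Fser * (qvar ^ (n + 1) - 1) = coeff n Fser := by
    intro n
    simp only [Fser, coeff_mk]
    rw [Finset.prod_range_succ]
    have h1 : qvar ^ (n + 1) - 1 ≠ 0 := qpow_sub_one_ne (Nat.succ_ne_zero n)
    have h2 : (∏ j ∈ Finset.range n, (qvar ^ (j + 1) - 1)) ≠ 0 :=
      Finset.prod_ne_zero_iff.mpr fun j _ => qpow_sub_one_ne (Nat.succ_ne_zero j)
    field_simp
  ext n
  induction n with
  | zero =>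
    rw [coeff_zero_eq_constantCoeff_apply, coeff_zero_eq_constantCoeff_apply,
      constantCoeff_expPS]
    simp [Fser, ← coeff_zero_eq_constantCoeff_apply]
  | succ n ih =>
    have h1 : qvar ^ (n + 1) - 1 ≠ 0 := qpow_sub_one_ne (Nat.succ_ne_zero n)
    have hf := (frec n).trans ih
    exact mul_right_cancel₀ h1 (hf.trans (erec n).symm)
end

section
/- Let n ≥ 0 and k ≥ 0. The ℤ-algebra homomorphism from ℤ[t_1,…,t_n]/(t_1^{k+1},…,t_n^{k+1}) to ℤ[u_{ij} : 1 ≤ i ≤ n, 1 ≤ j ≤ k]/(u_{ij}² : all i,j) determined by sending the class of t_i to the class of Σ_{j=1}^{k} u_{ij} is well-defined and injective. -/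
open MvPolynomial Finsupp

section helpers

variable {R : Type*} [CommRing R]

lemma pow_eq_zero_of_le' {a : R} {m l : ℕ} (h : a ^ m = 0) (hml : m ≤ l) : a ^ l = 0 := by
  rw [← Nat.add_sub_cancel' hml, pow_add, h, zero_mul]

lemma sq_zero_sum_pow {ι : Type*} (s : Finset ι) (a : ι → R)
    (h : ∀ j ∈ s, a j ^ 2 = 0) : (∑ j ∈ s, a j) ^ (s.card + 1) = 0 := by
  classical
  induction s using Finset.induction_on with
  | empty => simp
  | @insert x s hx ih =>
    rw [Finset.sum_insert hx, Finset.card_insert_of_notMem hx, add_pow]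
    refine Finset.sum_eq_zero fun i hi => ?_
    by_cases h2 : 2 ≤ i
    · rw [pow_eq_zero_of_le' (h x (Finset.mem_insert_self x s)) h2, zero_mul, zero_mul]
    · have hs : s.card + 1 ≤ s.card + 1 + 1 - i := by omega
      rw [pow_eq_zero_of_le' (ih (fun j hj => h j (Finset.mem_insert_of_mem hj))) hs,
        mul_zero, zero_mul]

end helpers

section main

variable {n k : ℕ}

/-- count of block `i` in a monomial exponent -/
def cnt (m : (Fin n × Fin k) →₀ ℕ) (i : Fin n) : ℕ := ∑ j : Fin k, m (i, j)

lemma cnt_add (u v : (Fin n × Fin k) →₀ ℕ) (i : Fin n) :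
    cnt (u + v) i = cnt u i + cnt v i := by
  simp [cnt, Finset.sum_add_distrib]

lemma cnt_zero (i : Fin n) : cnt (0 : (Fin n × Fin k) →₀ ℕ) i = 0 := by simp [cnt]

lemma cnt_single (p : Fin n × Fin k) (e : ℕ) (i : Fin n) :
    cnt (Finsupp.single p e) (i) = if i = p.1 then e else 0 := by
  classical
  rcases p with ⟨i', j'⟩
  simp only [cnt, Finsupp.single_apply]
  by_cases h : i = i'
  · subst h
    rw [if_pos rfl, Finset.sum_eq_single j']
    · simp
    · intro b _ hb; simp [Prod.ext_iff, hb.symm]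
    · simp
  · rw [if_neg h]
    apply Finset.sum_eq_zero
    intro j _
    simp only [Prod.mk.injEq]
    rw [if_neg]
    rintro ⟨h1, -⟩
    exact h h1.symm

local notation "S" => fun (i : Fin n) => ∑ j : Fin k, (X (i, j) : MvPolynomial (Fin n × Fin k) ℤ)

lemma cnt_of_coeff_S_pow (i₀ : Fin n) (e : ℕ) :
    ∀ u : (Fin n × Fin k) →₀ ℕ, coeff u ((S i₀) ^ e) ≠ 0 →
      ∀ i, cnt u i = if i = i₀ then e else 0 := by
  classical
  induction e with
  | zero =>
    intro u hu i
    rw [pow_zero, coeff_one] at hu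
    have : (0 : (Fin n × Fin k) →₀ ℕ) = u := by by_contra hh; simp [hh] at hu
    simp [← this, cnt_zero]
  | succ e ih =>
    intro u hu i
    rw [pow_succ, coeff_mul] at hu
    obtain ⟨⟨c, d⟩, hcd, hne⟩ := Finset.exists_ne_zero_of_sum_ne_zero hu
    have hc : coeff c ((S i₀) ^ e) ≠ 0 := fun h => hne (by simp [h])
    have hd : coeff d (S i₀) ≠ 0 := fun h => hne (by simp [h])
    rw [coeff_sum] at hd
    obtain ⟨j, _, hj⟩ := Finset.exists_ne_zero_of_sum_ne_zero hd
    rw [coeff_X'] at hj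
    have hdj : Finsupp.single ((i₀, j) : Fin n × Fin k) 1 = d := by
      by_contra hh; simp [hh] at hj
    have hu' : u = c + d := (Finset.HasAntidiagonal.mem_antidiagonal.mp hcd).symm
    rw [hu', cnt_add, ih c hc i, ← hdj, cnt_single]
    by_cases h : i = i₀ <;> simp [h]

lemma cnt_of_coeff_prod (b : Fin n → ℕ) (s : Finset (Fin n)) :
    ∀ m : (Fin n × Fin k) →₀ ℕ, coeff m (∏ i ∈ s, (S i) ^ b i) ≠ 0 →
      ∀ i, cnt m i = if i ∈ s then b i else 0 := by
  classical
  induction s using Finset.induction_on with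
  | empty =>
    intro m hm i
    rw [Finset.prod_empty, coeff_one] at hm
    have : (0 : (Fin n × Fin k) →₀ ℕ) = m := by by_contra hh; simp [hh] at hm
    simp [← this, cnt_zero]
  | @insert x s hx ih =>
    intro m hm i
    rw [Finset.prod_insert hx, coeff_mul] at hm
    obtain ⟨⟨c, d⟩, hcd, hne⟩ := Finset.exists_ne_zero_of_sum_ne_zero hm
    have hc : coeff c ((S x) ^ b x) ≠ 0 := fun h => hne (by simp [h])
    have hd : coeff d (∏ i ∈ s, (S i) ^ b i) ≠ 0 := fun h => hne (by simp [h])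
    have hm' : m = c + d := (Finset.HasAntidiagonal.mem_antidiagonal.mp hcd).symm
    rw [hm', cnt_add, cnt_of_coeff_S_pow x (b x) c hc i, ih d hd i]
    by_cases h : i = x
    · subst h; simp [hx]
    · simp [h, Finset.mem_insert]

lemma coeff_prod_squarefree (N : ℕ) :
    ∀ (b : Fin n → ℕ) (m : (Fin n × Fin k) →₀ ℕ),
      (∑ i, b i) = N → (∀ p, m p ≤ 1) → (∀ i, cnt m i = b i) →
      coeff m (∏ i, (S i) ^ b i) = ∏ i, (b i).factorial := by
  classical
  induction N with
  | zero =>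
    intro b m hN hsf hcnt
    have hb : ∀ i, b i = 0 := by
      intro i
      exact (Finset.sum_eq_zero_iff.mp hN) i (Finset.mem_univ i)
    have hm : m = 0 := by
      ext p
      have h1 : m p ≤ cnt m p.1 := by
        refine Finset.single_le_sum (f := fun j => m (p.1, j)) (fun _ _ => Nat.zero_le _)
          (Finset.mem_univ p.2)
      simp only [hcnt, hb] at h1
      simp only [Finsupp.coe_zero, Pi.zero_apply]
      omega
    simp [hb, hm]
  | succ N ih =>
    intro b m hN hsf hcnt
    have hex : ∃ i₀, b i₀ ≠ 0 := by
      by_contra hh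
      push_neg at hh
      simp [hh] at hN
    obtain ⟨i₀, hi₀⟩ := hex
    set b' : Fin n → ℕ := Function.update b i₀ (b i₀ - 1) with hb'
    have hb'i₀ : b' i₀ = b i₀ - 1 := Function.update_self _ _ _
    have hb'ne : ∀ i ≠ i₀, b' i = b i := fun i hi => Function.update_of_ne hi _ _
    have hsum' : (∑ i, b' i) = N := by
      have h1 := Finset.add_sum_erase Finset.univ b (Finset.mem_univ i₀)
      have h2 := Finset.add_sum_erase Finset.univ b' (Finset.mem_univ i₀)
      have h3 : ∑ i ∈ Finset.univ.erase i₀, b' i = ∑ i ∈ Finset.univ.erase i₀, b i :=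
        Finset.sum_congr rfl fun i hi => hb'ne i (Finset.mem_erase.mp hi).1
      omega
    have hprod : (∏ i, (S i) ^ b i) = (∏ i, (S i) ^ b' i) * S i₀ := by
      rw [← Finset.mul_prod_erase Finset.univ _ (Finset.mem_univ i₀),
          ← Finset.mul_prod_erase Finset.univ (fun i => (S i) ^ b' i) (Finset.mem_univ i₀)]
      have hpow : (S i₀) ^ b i₀ = (S i₀) ^ b' i₀ * S i₀ := by
        rw [hb'i₀, ← pow_succ]
        congr 1
        omega
      have heq : ∏ i ∈ Finset.univ.erase i₀, (S i) ^ b i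
          = ∏ i ∈ Finset.univ.erase i₀, (S i) ^ b' i :=
        Finset.prod_congr rfl fun i hi => by rw [hb'ne i (Finset.mem_erase.mp hi).1]
      rw [hpow, heq]; ring
    have hstep : ∀ j : Fin k, coeff m ((∏ i, (S i) ^ b' i) * X (i₀, j)) =
        if (i₀, j) ∈ m.support then ((∏ i, (b' i).factorial : ℕ) : ℤ) else 0 := by
      intro j
      rw [coeff_mul_X']
      by_cases hj : (i₀, j) ∈ m.support
      · rw [if_pos hj, if_pos hj]
        set m' := m - Finsupp.single ((i₀, j) : Fin n × Fin k) 1 with hm'def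
        have hm1 : m (i₀, j) = 1 := by
          have h1 := hsf (i₀, j)
          have h2 := Finsupp.mem_support_iff.mp hj
          omega
        have hm'app : ∀ p, m' p = m p - Finsupp.single ((i₀, j) : Fin n × Fin k) 1 p :=
          fun p => Finsupp.tsub_apply _ _ _
        have hsf' : ∀ p, m' p ≤ 1 := by
          intro p
          have := hsf p
          rw [hm'app]
          omega
        have hcnt' : ∀ i, cnt m' i = b' i := by
          intro i
          by_cases hi : i = i₀
          · have e1 : cnt m' i₀ + 1 = cnt m i₀ := by
              have a1 := Finset.add_sum_erase Finset.univ
                (fun j' => m' (i₀, j')) (Finset.mem_univ j)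
              have a2 := Finset.add_sum_erase Finset.univ
                (fun j' => m (i₀, j')) (Finset.mem_univ j)
              beta_reduce at a1 a2
              have a3 : ∑ j' ∈ Finset.univ.erase j, m' (i₀, j')
                  = ∑ j' ∈ Finset.univ.erase j, m (i₀, j') := by
                refine Finset.sum_congr rfl fun j' hj' => ?_
                rw [hm'app, Finsupp.single_apply,
                  if_neg (by simp [Prod.ext_iff, (Finset.mem_erase.mp hj').1.symm])]
                omega
              have a4 : m' (i₀, j) = 0 := by
                rw [hm'app, Finsupp.single_apply, if_pos rfl]
                omega
              simp only [cnt]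
              omega
            have h5 := hcnt i₀
            rw [hi, hb'i₀]
            omega
          · rw [hb'ne i hi, ← hcnt i]
            simp only [cnt]
            refine Finset.sum_congr rfl fun j' _ => ?_
            rw [hm'app, Finsupp.single_apply,
              if_neg (by simp only [Prod.mk.injEq, not_and]
                         exact fun hh => absurd hh.symm hi)]
            omega
        exact ih b' m' hsum' hsf' hcnt'
      · rw [if_neg hj, if_neg hj]
    have hcard : (Finset.univ.filter fun j : Fin k => (i₀, j) ∈ m.support).card = b i₀ := by
      rw [Finset.card_filter]
      rw [← hcnt i₀]
      refine (Finset.sum_congr rfl fun j _ => ?_).symm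
      have h1 := hsf (i₀, j)
      by_cases hh : (i₀, j) ∈ m.support
      · rw [if_pos hh]
        have := Finsupp.mem_support_iff.mp hh
        omega
      · rw [if_neg hh]
        have := Finsupp.notMem_support_iff.mp hh
        omega
    have hfact : b i₀ * ∏ i, (b' i).factorial = ∏ i, (b i).factorial := by
      rw [← Finset.mul_prod_erase Finset.univ (fun i => (b i).factorial) (Finset.mem_univ i₀),
          ← Finset.mul_prod_erase Finset.univ (fun i => (b' i).factorial) (Finset.mem_univ i₀)]
      have heq : ∏ i ∈ Finset.univ.erase i₀, (b' i).factorial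
          = ∏ i ∈ Finset.univ.erase i₀, (b i).factorial :=
        Finset.prod_congr rfl fun i hi => by rw [hb'ne i (Finset.mem_erase.mp hi).1]
      rw [heq, ← mul_assoc, hb'i₀, Nat.mul_factorial_pred hi₀]
    calc coeff m (∏ i, (S i) ^ b i)
        = ∑ j : Fin k, coeff m ((∏ i, (S i) ^ b' i) * X (i₀, j)) := by
          rw [hprod, Finset.mul_sum, coeff_sum]
      _ = ∑ j : Fin k, if (i₀, j) ∈ m.support
            then ((∏ i, (b' i).factorial : ℕ) : ℤ) else 0 :=
          Finset.sum_congr rfl fun j _ => hstep j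
      _ = ((∏ i, (b i).factorial : ℕ) : ℤ) := by
          rw [Finset.sum_ite, Finset.sum_const, Finset.sum_const_zero, add_zero, hcard,
            nsmul_eq_mul, ← Nat.cast_mul, hfact]

lemma mem_I_iff (p : MvPolynomial (Fin n) ℤ) :
    p ∈ Ideal.span (Set.range fun i : Fin n => (X i : MvPolynomial (Fin n) ℤ) ^ (k + 1)) ↔
      ∀ d ∈ p.support, ∃ i, k + 1 ≤ d i := by
  classical
  have h : (Set.range fun i : Fin n => (X i : MvPolynomial (Fin n) ℤ) ^ (k + 1))
      = (fun s => monomial s (1 : ℤ)) '' (Set.range fun i : Fin n => Finsupp.single i (k + 1)) := by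
    rw [← Set.range_comp]
    refine congrArg _ (funext fun i => ?_)
    simp [Function.comp, X_pow_eq_monomial]
  rw [h, mem_ideal_span_monomial_image]
  refine forall₂_congr fun d _ => ?_
  constructor
  · rintro ⟨si, ⟨i, rfl⟩, hle⟩
    exact ⟨i, by simpa using (Finsupp.single_le_iff.mp hle)⟩
  · rintro ⟨i, hi⟩
    exact ⟨Finsupp.single i (k + 1), ⟨i, rfl⟩, Finsupp.single_le_iff.mpr hi⟩

lemma mem_J_iff (p : MvPolynomial (Fin n × Fin k) ℤ) :
    p ∈ Ideal.span (Set.range fun q : Fin n × Fin k =>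
        (X q : MvPolynomial (Fin n × Fin k) ℤ) ^ 2) ↔
      ∀ m ∈ p.support, ∃ q, 2 ≤ m q := by
  classical
  have h : (Set.range fun q : Fin n × Fin k => (X q : MvPolynomial (Fin n × Fin k) ℤ) ^ 2)
      = (fun s => monomial s (1 : ℤ)) ''
        (Set.range fun q : Fin n × Fin k => Finsupp.single q 2) := by
    rw [← Set.range_comp]
    refine congrArg _ (funext fun q => ?_)
    simp [Function.comp, X_pow_eq_monomial]
  rw [h, mem_ideal_span_monomial_image]
  refine forall₂_congr fun m _ => ?_
  constructor
  · rintro ⟨si, ⟨q, rfl⟩, hle⟩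
    exact ⟨q, by simpa using (Finsupp.single_le_iff.mp hle)⟩
  · rintro ⟨q, hq⟩
    exact ⟨Finsupp.single q 2, ⟨q, rfl⟩, Finsupp.single_le_iff.mpr hq⟩

lemma key (p : MvPolynomial (Fin n) ℤ)
    (h : (aeval fun i : Fin n => ∑ j : Fin k, (X (i, j) : MvPolynomial (Fin n × Fin k) ℤ)) p ∈
      Ideal.span (Set.range fun q : Fin n × Fin k =>
        (X q : MvPolynomial (Fin n × Fin k) ℤ) ^ 2)) :
    p ∈ Ideal.span (Set.range fun i : Fin n => (X i : MvPolynomial (Fin n) ℤ) ^ (k + 1)) := by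
  classical
  rw [mem_I_iff]
  intro d hd
  by_contra hcon
  push_neg at hcon
  have hdk : ∀ i, d i ≤ k := fun i => by have := hcon i; omega
  set mb : (Fin n × Fin k) →₀ ℕ :=
    Finsupp.equivFunOnFinite.symm (fun q => if (q.2 : ℕ) < d q.1 then 1 else 0) with hmb
  have hmbapp : ∀ q : Fin n × Fin k, mb q = if (q.2 : ℕ) < d q.1 then 1 else 0 := fun q => rfl
  have hsf : ∀ q, mb q ≤ 1 := by
    intro q; rw [hmbapp]; split <;> omega
  have hcntmb : ∀ i, cnt mb i = d i := by
    intro i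
    simp only [cnt, hmbapp]
    rw [Fin.sum_univ_eq_sum_range (fun jj => if jj < d i then (1 : ℕ) else 0) k,
      ← Finset.card_filter]
    have hfe : (Finset.range k).filter (fun jj => jj < d i) = Finset.range (d i) := by
      ext x
      simp only [Finset.mem_filter, Finset.mem_range]
      have := hdk i
      omega
    rw [hfe, Finset.card_range]
  have hzero : coeff mb ((aeval fun i : Fin n =>
      ∑ j : Fin k, (X (i, j) : MvPolynomial (Fin n × Fin k) ℤ)) p) = 0 := by
    by_contra h0
    obtain ⟨q, hq⟩ := (mem_J_iff _).mp h mb (MvPolynomial.mem_support_iff.mpr h0)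
    have := hsf q
    omega
  have hexp : coeff mb ((aeval fun i : Fin n =>
      ∑ j : Fin k, (X (i, j) : MvPolynomial (Fin n × Fin k) ℤ)) p)
      = ∑ d' ∈ p.support, coeff d' p *
        coeff mb (∏ i : Fin n, (S i) ^ d' i) := by
    conv_lhs => rw [as_sum p]
    rw [map_sum, coeff_sum]
    refine Finset.sum_congr rfl fun d' _ => ?_
    rw [aeval_monomial, algebraMap_eq,
      Finsupp.prod_fintype _ _ (fun i => pow_zero _), coeff_C_mul]
  have hsingle : ∑ d' ∈ p.support, coeff d' p * coeff mb (∏ i : Fin n, (S i) ^ d' i)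
      = coeff d p * coeff mb (∏ i : Fin n, (S i) ^ d i) := by
    refine Finset.sum_eq_single d (fun d' _ hne => ?_) (fun hh => absurd hd hh)
    have hvanish : coeff mb (∏ i : Fin n, (S i) ^ d' i) = 0 := by
      by_contra h0
      refine hne (Finsupp.ext fun i => ?_).symm
      have := cnt_of_coeff_prod (fun i => d' i) Finset.univ mb h0 i
      rw [if_pos (Finset.mem_univ i)] at this
      rw [← this, hcntmb]
    rw [hvanish, mul_zero]
  have hcoeffd : coeff mb (∏ i : Fin n, (S i) ^ d i) = ((∏ i, (d i).factorial : ℕ) : ℤ) :=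
    coeff_prod_squarefree (∑ i, d i) (fun i => d i) mb rfl hsf hcntmb
  rw [hexp, hsingle, hcoeffd] at hzero
  have hfac : ((∏ i, (d i).factorial : ℕ) : ℤ) ≠ 0 := by
    have hp : 0 < ∏ i, (d i).factorial :=
      Finset.prod_pos fun i _ => Nat.factorial_pos (d i)
    exact_mod_cast hp.ne'
  have : coeff d p = 0 := by
    rcases mul_eq_zero.mp hzero with h1 | h1
    · exact h1
    · exact absurd h1 hfac
  exact MvPolynomial.mem_support_iff.mp hd this

end main

set_option synthInstance.maxHeartbeats 1000000
set_option maxHeartbeats 1000000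

/-- The ℤ-algebra homomorphism `T_k = ℤ[t_1,…,t_n]/(t_i^{k+1}) → T'_k = ℤ[u_{ij}]/(u_{ij}²)`
determined by `t_i ↦ Σ_{j=1}^k u_{ij}` is well-defined (i.e. exists) and injective. -/
theorem truncated_to_squarezero_injective (n k : ℕ)
    (I : Ideal (MvPolynomial (Fin n) ℤ))
    (hI : I = Ideal.span (Set.range fun i : Fin n => (MvPolynomial.X i) ^ (k + 1)))
    (J : Ideal (MvPolynomial (Fin n × Fin k) ℤ))
    (hJ : J = Ideal.span (Set.range fun p : Fin n × Fin k => (MvPolynomial.X p) ^ 2)) :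
    ∃ φ : (MvPolynomial (Fin n) ℤ ⧸ I) →+* (MvPolynomial (Fin n × Fin k) ℤ ⧸ J),
      (∀ i : Fin n,
        φ (Ideal.Quotient.mk I (MvPolynomial.X i)) =
          ∑ j : Fin k, Ideal.Quotient.mk J (MvPolynomial.X (i, j))) ∧
      Function.Injective φ := by
  classical
  set f : MvPolynomial (Fin n) ℤ →ₐ[ℤ] MvPolynomial (Fin n × Fin k) ℤ :=
    aeval fun i : Fin n => ∑ j : Fin k, X (i, j) with hf
  set g : MvPolynomial (Fin n) ℤ →+* (MvPolynomial (Fin n × Fin k) ℤ ⧸ J) :=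
    (Ideal.Quotient.mk J).comp f.toRingHom with hg
  have hXsq : ∀ q : Fin n × Fin k,
      (Ideal.Quotient.mk J (X q)) ^ 2 = 0 := by
    intro q
    rw [← map_pow]
    exact Ideal.Quotient.eq_zero_iff_mem.mpr (hJ ▸ Ideal.subset_span ⟨q, rfl⟩)
  have hker : ∀ a ∈ I, g a = 0 := by
    have hle : I ≤ RingHom.ker g := by
      rw [hI, Ideal.span_le]
      rintro _ ⟨i, rfl⟩
      simp only [SetLike.mem_coe]
      have : g (X i ^ (k + 1)) = (∑ j : Fin k, Ideal.Quotient.mk J (X (i, j))) ^ (k + 1) := by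
        simp [hg, hf, map_pow, map_sum]
      rw [RingHom.mem_ker, this]
      have hcard : (Finset.univ : Finset (Fin k)).card = k := by simp
      have := sq_zero_sum_pow (Finset.univ : Finset (Fin k))
        (fun j => Ideal.Quotient.mk J (X (i, j))) (fun j _ => hXsq (i, j))
      rwa [hcard] at this
    exact fun a ha => hle ha
  refine ⟨Ideal.Quotient.lift I g hker, fun i => ?_, ?_⟩
  · rw [Ideal.Quotient.lift_mk]
    simp [hg, hf, map_sum]
  · rw [injective_iff_map_eq_zero]
    intro x hx
    obtain ⟨a, rfl⟩ := Ideal.Quotient.mk_surjective x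
    rw [Ideal.Quotient.lift_mk] at hx
    have hfa : f a ∈ J := by
      rw [← Ideal.Quotient.eq_zero_iff_mem]
      exact hx
    have : a ∈ I := by
      rw [hI]
      exact key a (hJ ▸ hfa)
    exact Ideal.Quotient.eq_zero_iff_mem.mpr this
end
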